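/- arXiv:2510.00439 — 3 statements merged into one kernel-verified Lean document; each statement's English description precedes it below -/
import Mathlib

section
/- Fix integers d ≥ 1, N₀ ≥ 1, a real h > 0, a real p with 1 < p ≤ 1 + 2/d, set δ := 1/N₀, and let R ∈ ℕ, I > 0. Let u : ℕ → (ℤ^d → ℝ) (defined for n ≥ N₀) satisfy, for all n > N₀ and i ∈ ℤ^d, the recurrence u_{n+1}(i) = (δ²/h²)·Σ_{j=1}^d (u_n(i − e_j) + u_n(i + e_j)) + (2 − 2d·δ²/h²)·u_n(i) − u_{n−1}(i) + δ^(2−p)·|u_n(i)|^(p−1)·tan(δ·|u_n(i)|/n^(p−1)). Assume: (i) u_n(i) = 0 for n ∈ {N₀, N₀+1} whenever ‖i‖₁ > R; (ii) Σ_{i∈ℤ^d} u_{N₀}(i) ≥ 0; (iii) Σ_{i∈ℤ^d} (u_{N₀+1}(i) − u_{N₀}(i)) > I. Then the solution blows up in finite time: there exist an integer N_b ≥ N₀ and i_b ∈ ℤ^d such that |u_{N_b}(i_b)| ≥ (π/2)·δ^(−1)·N_b^(p−1). -/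
/-!
Suppose `|u n i| < (π / 2) δ⁻¹ n ^ (p - 1)` for all `n ≥ N₀`. Then the argument of `tan` lies in
`[0, π / 2)`, so `tan x ≥ x` and the nonlinear term is at least `δ ^ (3 - p) |u| ^ p / n ^ (p - 1)`.
The data spread by one site per step, so `u n` is supported in a cube of side `O(n)`. Summing the
scheme over the lattice removes the discrete Laplacian: the mass `S n = ∑ᵢ u n i` satisfies
`S (n + 1) - 2 S n + S (n - 1) = ∑ᵢ (nonlinear term) ≥ c |S n| ^ p / n ^ (p + 1)`, by Hölder on
the cube and `d (p - 1) ≤ 2`. Summing this over dyadic blocks gives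
`D (4m) ≥ D (2m) + c' D m ^ p` for the increments `D n = S (n + 1) - S n`, so `D (4 ^ j m)`
outgrows every geometric sequence in `j`, while the pointwise bound makes `S` polynomially bounded.
-/

open Real Function Filter

section Lattice

variable {d : ℕ}

noncomputable def cube (d M : ℕ) : Finset (Fin d → ℤ) :=
  Fintype.piFinset fun _ => Finset.Icc (-(M : ℤ)) M

lemma mem_cube {M : ℕ} {i : Fin d → ℤ} : i ∈ cube d M ↔ ∀ k, |i k| ≤ M := by
  simp [cube, abs_le]

lemma card_cube (M : ℕ) : (cube d M).card = (2 * M + 1) ^ d := by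
  simp only [cube, Fintype.card_piFinset, Int.card_Icc, Finset.prod_const, Finset.card_univ,
    Fintype.card_fin]
  congr 1
  omega

lemma cube_mono {M M' : ℕ} (h : M ≤ M') : cube d M ⊆ cube d M' := fun i hi =>
  mem_cube.2 fun k => (mem_cube.1 hi k).trans (by exact_mod_cast h)

lemma mem_cube_succ_of_add_single {M : ℕ} {i : Fin d → ℤ} {j : Fin d} {c : ℤ} (hc : |c| ≤ 1)
    (h : i + Pi.single j c ∈ cube d M) : i ∈ cube d (M + 1) := by
  refine mem_cube.2 fun k => ?_
  have hk := mem_cube.1 h k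
  have hs : |(Pi.single j c : Fin d → ℤ) k| ≤ 1 := by
    rcases eq_or_ne k j with rfl | hkj
    · simpa using hc
    · simp [hkj]
  rw [Pi.add_apply] at hk
  push_cast
  calc |i k| = |(i k + (Pi.single j c : Fin d → ℤ) k) - (Pi.single j c : Fin d → ℤ) k| := by
        rw [add_sub_cancel_right]
    _ ≤ _ := abs_sub _ _
    _ ≤ M + 1 := add_le_add hk hs

lemma support_subset_cube_iff {f : (Fin d → ℤ) → ℝ} {M : ℕ} :
    support f ⊆ cube d M ↔ ∀ i ∉ cube d M, f i = 0 := by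
  simp [Set.subset_def, not_imp_comm]

lemma support_subset_cube_of_natAbs {f : (Fin d → ℤ) → ℝ} {R : ℕ}
    (hf : ∀ i : Fin d → ℤ, R < ∑ k, (i k).natAbs → f i = 0) : support f ⊆ cube d R := by
  refine support_subset_cube_iff.2 fun i hi => hf i ?_
  obtain ⟨k, hk⟩ : ∃ k, (R : ℤ) < |i k| := by simpa [mem_cube] using hi
  rw [Int.abs_eq_natAbs] at hk
  exact (Nat.cast_lt.1 hk).trans_le
    (Finset.single_le_sum (f := fun k => (i k).natAbs) (fun k _ => Nat.zero_le _)
      (Finset.mem_univ k))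

def neighbourSum (f : (Fin d → ℤ) → ℝ) (i : Fin d → ℤ) : ℝ :=
  ∑ j, (f (i - Pi.single j 1) + f (i + Pi.single j 1))

lemma neighbourSum_eq_zero {f : (Fin d → ℤ) → ℝ} {M : ℕ} (hf : support f ⊆ cube d M)
    {i : Fin d → ℤ} (hi : i ∉ cube d (M + 1)) : neighbourSum f i = 0 := by
  have hzero : ∀ j (c : ℤ), |c| ≤ 1 → f (i + Pi.single j c) = 0 := fun j c hc =>
    support_subset_cube_iff.1 hf _ fun h => hi (mem_cube_succ_of_add_single hc h)
  refine Finset.sum_eq_zero fun j _ => ?_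
  rw [sub_eq_add_neg, ← Pi.single_neg, hzero j (-1) (by simp), hzero j 1 (by simp), add_zero]

lemma finsum_neighbourSum {f : (Fin d → ℤ) → ℝ} (hf : HasFiniteSupport f) :
    ∑ᶠ i, neighbourSum f i = 2 * d * ∑ᶠ i, f i := by
  have hsub (v : Fin d → ℤ) : HasFiniteSupport fun i => f (i - v) :=
    hf.fun_comp_of_injective (sub_left_injective (b := v))
  have hadd (v : Fin d → ℤ) : HasFiniteSupport fun i => f (i + v) :=
    hf.fun_comp_of_injective (add_left_injective v)
  have hswap := finsum_sum_comm Finset.univ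
    (fun (i : Fin d → ℤ) (j : Fin d) => f (i - Pi.single j 1) + f (i + Pi.single j 1))
    fun j _ => (hsub _).add (hadd _)
  have hsub_eq (v : Fin d → ℤ) : ∑ᶠ i, f (i - v) = ∑ᶠ i, f i :=
    finsum_comp_equiv (Equiv.subRight v)
  have hadd_eq (v : Fin d → ℤ) : ∑ᶠ i, f (i + v) = ∑ᶠ i, f i :=
    finsum_comp_equiv (Equiv.addRight v)
  simp only [neighbourSum, hswap, finsum_add_distrib (hsub _) (hadd _), hsub_eq, hadd_eq,
    Finset.sum_const, Finset.card_univ, Fintype.card_fin, nsmul_eq_mul]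
  ring

end Lattice

section Scheme

variable {d : ℕ}

def SolvesScheme (a b : ℝ) (F : ℕ → ℝ → ℝ) (N₀ : ℕ) (u : ℕ → (Fin d → ℤ) → ℝ) : Prop :=
  ∀ n, N₀ < n → ∀ i,
    u (n + 1) i = a * neighbourSum (u n) i + b * u n i - u (n - 1) i + F n (u n i)

variable {a b : ℝ} {F : ℕ → ℝ → ℝ} {N₀ : ℕ} {u : ℕ → (Fin d → ℤ) → ℝ}

theorem SolvesScheme.support_subset_cube (hu : SolvesScheme a b F N₀ u) (hF : ∀ n, F n 0 = 0)
    {R : ℕ} (h₀ : support (u N₀) ⊆ cube d R) (h₁ : support (u (N₀ + 1)) ⊆ cube d R)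
    {n : ℕ} (hn : N₀ ≤ n) : support (u n) ⊆ cube d (R + (n - N₀)) := by
  suffices key : ∀ k, support (u (N₀ + k)) ⊆ cube d (R + k) ∧
      support (u (N₀ + k + 1)) ⊆ cube d (R + k + 1) by
    obtain ⟨k, rfl⟩ := Nat.exists_eq_add_of_le hn
    simpa using (key k).1
  intro k
  induction k with
  | zero => exact ⟨h₀, h₁.trans (cube_mono (Nat.le_succ R))⟩
  | succ k ih =>
    refine ⟨ih.2, support_subset_cube_iff.2 fun i hi => ?_⟩
    have hi₁ : i ∉ cube d (R + k + 1) := fun h => hi (cube_mono (by omega) h)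
    have hi₀ : i ∉ cube d (R + k) := fun h => hi (cube_mono (by omega) h)
    rw [show N₀ + (k + 1) + 1 = N₀ + k + 1 + 1 by ring, hu _ (by omega),
      neighbourSum_eq_zero ih.2 hi, support_subset_cube_iff.1 ih.2 i hi₁,
      Nat.add_sub_cancel, support_subset_cube_iff.1 ih.1 i hi₀, hF]
    ring

theorem SolvesScheme.finsum_succ (hu : SolvesScheme a b F N₀ u) (hF : ∀ n, F n 0 = 0)
    {n : ℕ} (hn : N₀ < n) (h₁ : HasFiniteSupport (u n)) (h₀ : HasFiniteSupport (u (n - 1))) :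
    ∑ᶠ i, u (n + 1) i
      = (2 * d * a + b) * ∑ᶠ i, u n i - ∑ᶠ i, u (n - 1) i + ∑ᶠ i, F n (u n i) := by
  have hnb : HasFiniteSupport (neighbourSum (u n)) :=
    HasFiniteSupport.sum (fun j => (h₁.fun_comp_of_injective (sub_left_injective (b := _))).add
      (h₁.fun_comp_of_injective (add_left_injective _))) _
  have hmul (c : ℝ) {f : (Fin d → ℤ) → ℝ} (hf : HasFiniteSupport f) :
      HasFiniteSupport fun i => c * f i := hf.fun_comp (mul_zero c)
  have hlin : HasFiniteSupport fun i => a * neighbourSum (u n) i + b * u n i :=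
    (hmul a hnb).add (hmul b h₁)
  rw [finsum_congr (hu n hn),
    finsum_add_distrib (f := fun i => a * neighbourSum (u n) i + b * u n i - u (n - 1) i)
      (hlin.sub h₀) (h₁.fun_comp (hF n)),
    finsum_sub_distrib (f := fun i => a * neighbourSum (u n) i + b * u n i) hlin h₀,
    finsum_add_distrib (f := fun i => a * neighbourSum (u n) i) (hmul a hnb) (hmul b h₁),
    ← mul_finsum, ← mul_finsum, finsum_neighbourSum h₁]
  ring

end Scheme

section TangentNonlinearity

noncomputable def tanNonlinearity (δ p ν x : ℝ) : ℝ :=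
  δ ^ (2 - p) * |x| ^ (p - 1) * tan (δ * |x| / ν)

lemma tanNonlinearity_zero (δ p ν : ℝ) : tanNonlinearity δ p ν 0 = 0 := by
  simp [tanNonlinearity]

lemma rpow_le_mul_tanNonlinearity {δ ν p x : ℝ} (hδ : 0 < δ) (hν : 0 < ν) (hp : p ≠ 0)
    (hx : δ * |x| / ν < π / 2) : δ ^ (3 - p) * |x| ^ p ≤ ν * tanNonlinearity δ p ν x := by
  calc δ ^ (3 - p) * |x| ^ p = ν * (δ ^ (2 - p) * |x| ^ (p - 1) * (δ * |x| / ν)) := by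
        have hxp : |x| ^ p = |x| ^ (p - 1) * |x| := by
          rw [← rpow_add_one' (abs_nonneg x) (by simpa using hp), sub_add_cancel]
        rw [show (3 : ℝ) - p = 2 - p + 1 by ring, rpow_add_one hδ.ne', hxp]
        field_simp
    _ ≤ ν * tanNonlinearity δ p ν x := by
        unfold tanNonlinearity
        gcongr
        exact le_tan (by positivity) hx

lemma abs_sum_rpow_le {ι : Type*} (s : Finset ι) (f : ι → ℝ) {p : ℝ} (hp : 1 ≤ p) :
    |∑ i ∈ s, f i| ^ p ≤ (s.card : ℝ) ^ (p - 1) * ∑ i ∈ s, |f i| ^ p :=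
  (rpow_le_rpow (abs_nonneg _) (Finset.abs_sum_le_sum_abs f s) (by linarith)).trans
    (rpow_sum_le_const_mul_sum_rpow s f hp)

variable {d M : ℕ} {v : (Fin d → ℤ) → ℝ}

lemma rpow_abs_finsum_le_finsum_tanNonlinearity {δ ν p : ℝ} (hδ : 0 < δ) (hν : 0 < ν)
    (hp : 1 ≤ p) (hv : support v ⊆ cube d M) (hsmall : ∀ i, δ * |v i| / ν < π / 2) :
    δ ^ (3 - p) * |∑ᶠ i, v i| ^ p
      ≤ (((2 * M + 1) ^ d : ℕ) : ℝ) ^ (p - 1) * ν * ∑ᶠ i, tanNonlinearity δ p ν (v i) := by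
  rw [finsum_eq_sum_of_support_subset v hv,
    finsum_eq_sum_of_support_subset (fun i => tanNonlinearity δ p ν (v i))
      ((support_comp_subset (tanNonlinearity_zero δ p ν) v).trans hv),
    ← card_cube M, mul_assoc, Finset.mul_sum]
  calc δ ^ (3 - p) * |∑ i ∈ cube d M, v i| ^ p
      ≤ δ ^ (3 - p) * (((cube d M).card : ℝ) ^ (p - 1) * ∑ i ∈ cube d M, |v i| ^ p) := by
        gcongr
        exact abs_sum_rpow_le _ _ hp
    _ = ((cube d M).card : ℝ) ^ (p - 1) * ∑ i ∈ cube d M, δ ^ (3 - p) * |v i| ^ p := by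
        rw [mul_left_comm, Finset.mul_sum]
    _ ≤ ((cube d M).card : ℝ) ^ (p - 1) * ∑ i ∈ cube d M, ν * tanNonlinearity δ p ν (v i) :=
        mul_le_mul_of_nonneg_left (Finset.sum_le_sum fun i _ =>
          rpow_le_mul_tanNonlinearity hδ hν (zero_lt_one.trans_le hp).ne' (hsmall i))
          (by positivity)

lemma card_cube_rpow_mul_rpow_le {K t p : ℝ} (ht : 1 ≤ t)
    (hM : ((2 * M + 1 : ℕ) : ℝ) ≤ K * t) (hp : 1 ≤ p) (hdp : d * (p - 1) ≤ 2) :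
    (((2 * M + 1) ^ d : ℕ) : ℝ) ^ (p - 1) * t ^ (p - 1) ≤ K ^ (d * (p - 1)) * t ^ (p + 1) := by
  have ht₀ : 0 < t := by linarith
  have hK : 0 < K := by
    by_contra! hK
    have : (0 : ℝ) < ((2 * M + 1 : ℕ) : ℝ) := by positivity
    nlinarith
  calc (((2 * M + 1) ^ d : ℕ) : ℝ) ^ (p - 1) * t ^ (p - 1)
      ≤ ((K * t) ^ d) ^ (p - 1) * t ^ (p - 1) := by
        push_cast at hM ⊢
        gcongr
    _ = K ^ (d * (p - 1)) * (t ^ (d * (p - 1)) * t ^ (p - 1)) := by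
        rw [← rpow_natCast, ← rpow_mul (by positivity), mul_rpow hK.le ht₀.le]
        ring
    _ ≤ K ^ (d * (p - 1)) * t ^ (p + 1) := by
        rw [← rpow_add ht₀]
        exact mul_le_mul_of_nonneg_left (rpow_le_rpow_of_exponent_le ht (by linarith))
          (by positivity)

lemma le_finsum_tanNonlinearity {δ p K t : ℝ} (hδ : 0 < δ) (hp : 1 ≤ p)
    (hdp : d * (p - 1) ≤ 2) (ht : 1 ≤ t) (hM : ((2 * M + 1 : ℕ) : ℝ) ≤ K * t)
    (hv : support v ⊆ cube d M) (hsmall : ∀ i, |v i| < π / 2 * δ⁻¹ * t ^ (p - 1)) :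
    δ ^ (3 - p) / K ^ (d * (p - 1)) * |∑ᶠ i, v i| ^ p / t ^ (p + 1)
      ≤ ∑ᶠ i, tanNonlinearity δ p (t ^ (p - 1)) (v i) := by
  have hν : 0 < t ^ (p - 1) := rpow_pos_of_pos (by linarith) _
  have hK : 0 < K ^ (d * (p - 1)) * t ^ (p + 1) :=
    lt_of_lt_of_le (by positivity) (card_cube_rpow_mul_rpow_le ht hM hp hdp)
  have hsum := rpow_abs_finsum_le_finsum_tanNonlinearity hδ hν hp hv fun i => by
    rw [div_lt_iff₀ hν]
    calc δ * |v i| < δ * (π / 2 * δ⁻¹ * t ^ (p - 1)) := mul_lt_mul_of_pos_left (hsmall i) hδ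
      _ = π / 2 * t ^ (p - 1) := by field_simp
  have hT := nonneg_of_mul_nonneg_right ((by positivity : (0 : ℝ) ≤ _).trans hsum)
    (by positivity)
  rw [div_mul_eq_mul_div, div_div]
  refine div_le_of_le_mul₀ hK.le hT (hsum.trans ?_)
  rw [mul_comm _ (∑ᶠ i, _)]
  exact mul_le_mul_of_nonneg_left (card_cube_rpow_mul_rpow_le ht hM hp hdp) hT

lemma finsum_le_of_support_subset_cube {B K t r : ℝ} (ht : 0 < t)
    (hM : ((2 * M + 1 : ℕ) : ℝ) ≤ K * t) (hv : support v ⊆ cube d M)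
    (hB : ∀ i, |v i| ≤ B * t ^ r) :
    ∑ᶠ i, v i ≤ K ^ d * B * t ^ ((d : ℝ) + r) := by
  have hB₀ : 0 ≤ B * t ^ r := (abs_nonneg _).trans (hB 0)
  calc ∑ᶠ i, v i ≤ ((cube d M).card : ℝ) * (B * t ^ r) := by
        rw [finsum_eq_sum_of_support_subset v hv, ← nsmul_eq_mul]
        exact Finset.sum_le_card_nsmul _ _ _ fun i _ => (le_abs_self _).trans (hB i)
    _ ≤ (K * t) ^ d * (B * t ^ r) := by
        rw [card_cube, Nat.cast_pow]
        gcongr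
    _ = K ^ d * B * t ^ ((d : ℝ) + r) := by
        rw [rpow_add ht, rpow_natCast, mul_pow]
        ring

end TangentNonlinearity

section DiscreteKato

lemma add_mul_le_of_le_sub {f : ℕ → ℝ} {ε : ℝ} {a T : ℕ}
    (h : ∀ t < T, ε ≤ f (a + t + 1) - f (a + t)) : f a + T * ε ≤ f (a + T) := by
  induction T with
  | zero => simp
  | succ T ih =>
    push_cast
    rw [← add_assoc]
    linarith [ih fun t ht => h t (by omega), h T (by omega)]

lemma pow_mul_le_of_mul_le_succ {b : ℕ → ℝ} {r : ℝ} (hr : 0 ≤ r) {J : ℕ}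
    (h : ∀ j, J ≤ j → r * b j ≤ b (j + 1)) (m : ℕ) : r ^ m * b J ≤ b (J + m) := by
  induction m with
  | zero => simp
  | succ m ih =>
    rw [pow_succ', mul_assoc, ← add_assoc]
    exact (mul_le_mul_of_nonneg_left ih hr).trans (h _ (Nat.le_add_right J m))

lemma natCast_two_pow_add_one_rpow_le {q : ℝ} (hq : 0 ≤ q) (k : ℕ) :
    ((2 ^ k + 1 : ℕ) : ℝ) ^ q ≤ (2 ^ q) ^ (k + 1) := by
  rw [rpow_pow_comm zero_le_two]
  refine rpow_le_rpow (by positivity) ?_ hq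
  have : 2 ^ k + 1 ≤ 2 ^ (k + 1) := by
    rw [pow_succ]
    linarith [Nat.one_le_two_pow (n := k)]
  exact_mod_cast this

lemma exists_mul_pow_lt_of_add_mul_rpow_le {b : ℕ → ℝ} {c p : ℝ} (hc : 0 < c) (hp : 1 < p)
    (hb₀ : 0 < b 0) (hb : ∀ j, b j + c * b j ^ p ≤ b (j + 1)) (C : ℝ) {E : ℝ} (hE : 0 < E) :
    ∃ j, C * E ^ j < b j := by
  have hpos : ∀ j, 0 < b j := by
    intro j
    induction j with
    | zero => exact hb₀
    | succ j ih => linarith [hb j, mul_nonneg hc.le (rpow_nonneg ih.le p)]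
  have hmono : Monotone b := monotone_nat_of_le_succ fun j => by
    linarith [hb j, mul_nonneg hc.le (rpow_nonneg (hpos j).le p)]
  have hρ : ∀ J, 0 ≤ c * b J ^ (p - 1) := fun J => mul_nonneg hc.le (rpow_nonneg (hpos J).le _)
  have hgeom : ∀ J m, (1 + c * b J ^ (p - 1)) ^ m * b J ≤ b (J + m) := by
    refine fun J => pow_mul_le_of_mul_le_succ (by linarith [hρ J]) fun j hJj => ?_
    have hpow : b J ^ (p - 1) * b j ≤ b j ^ p := by
      calc b J ^ (p - 1) * b j ≤ b j ^ (p - 1) * b j :=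
            mul_le_mul_of_nonneg_right (rpow_le_rpow (hpos J).le (hmono hJj) (by linarith))
              (hpos j).le
        _ = b j ^ p := by rw [rpow_sub_one (hpos j).ne', div_mul_cancel₀ _ (hpos j).ne']
    nlinarith [hb j]
  have htends : Tendsto b atTop atTop := by
    refine tendsto_atTop_mono (fun m => by simpa using hgeom 0 m) ?_
    refine Tendsto.atTop_mul_const hb₀ (tendsto_pow_atTop_atTop_of_one_lt ?_)
    have := rpow_pos_of_pos hb₀ (p - 1)
    nlinarith
  obtain ⟨J, hJ⟩ := (((tendsto_rpow_atTop (by linarith : 0 < p - 1)).comp htends).const_mul_atTop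
    hc |>.eventually_ge_atTop E).exists
  obtain ⟨m, hm⟩ := pow_unbounded_of_one_lt (C * E ^ J / b J)
    ((one_lt_div hE).2 (lt_one_add E))
  refine ⟨J + m, ?_⟩
  calc C * E ^ (J + m) = C * E ^ J / b J * E ^ m * b J := by
        field_simp [(hpos J).ne']
        ring
    _ < ((1 + E) / E) ^ m * E ^ m * b J := by gcongr; exact hpos J
    _ = (1 + E) ^ m * b J := by rw [div_pow, div_mul_cancel₀ _ (by positivity)]
    _ ≤ (1 + c * b J ^ (p - 1)) ^ m * b J := by
        gcongr
        · exact (hpos J).le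
        · exact hJ
    _ ≤ b (J + m) := hgeom J m

variable {S : ℕ → ℝ} {N₀ : ℕ}

lemma increment_mono (hconv : ∀ n, N₀ ≤ n → 0 ≤ S (n + 2) - 2 * S (n + 1) + S n)
    {m n : ℕ} (hm : N₀ ≤ m) (hmn : m ≤ n) : S (m + 1) - S m ≤ S (n + 1) - S n := by
  induction n, hmn using Nat.le_induction with
  | base => rfl
  | succ n hmn ih => linarith [hconv n (hm.trans hmn)]

lemma dyadic_increment_step {c p : ℝ} (hc : 0 ≤ c) (hp : 0 ≤ p)
    (hS : ∀ n, N₀ ≤ n →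
      c * |S (n + 1)| ^ p / ((n : ℝ) + 1) ^ (p + 1) ≤ S (n + 2) - 2 * S (n + 1) + S n)
    {m : ℕ} (hm : N₀ ≤ m) (hm₀ : 0 < m) (hSm : 0 ≤ S m) (hDm : 0 ≤ S (m + 1) - S m) :
    S (2 * m + 1) - S (2 * m) + 2 * c / 4 ^ (p + 1) * (S (m + 1) - S m) ^ p
      ≤ S (4 * m + 1) - S (4 * m) := by
  have hconv : ∀ n, N₀ ≤ n → 0 ≤ S (n + 2) - 2 * S (n + 1) + S n := fun n hn =>
    le_trans (by positivity) (hS n hn)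
  set D := fun n => S (n + 1) - S n with hD
  have hm' : (0 : ℝ) < m := by exact_mod_cast hm₀
  -- for `2m ≤ n < 4m`, `S (n + 1) ≥ S m + (n + 1 - m) D m ≥ m D m` and `n + 1 ≤ 4m`
  have hstep : ∀ t < 2 * m,
      c * (m * D m) ^ p / (4 * m) ^ (p + 1) ≤ D (2 * m + t + 1) - D (2 * m + t) := by
    intro t ht
    have hlow : (m : ℝ) * D m ≤ |S (2 * m + t + 1)| := by
      have h := add_mul_le_of_le_sub (T := m + t + 1) fun s _ =>
        increment_mono hconv hm (Nat.le_add_right m s)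
      rw [show m + (m + t + 1) = 2 * m + t + 1 by ring] at h
      refine le_trans ?_ (h.trans (le_abs_self _))
      have : (m : ℝ) ≤ ((m + t + 1 : ℕ) : ℝ) := by exact_mod_cast (by omega : m ≤ m + t + 1)
      nlinarith
    have h4m : ((2 * m + t : ℕ) : ℝ) + 1 ≤ 4 * m := by
      have : 2 * m + t + 1 ≤ 4 * m := by omega
      exact_mod_cast this
    refine le_trans ?_ ((hS (2 * m + t) (by omega)).trans_eq (by simp only [hD]; ring_nf))
    gcongr
  have h := add_mul_le_of_le_sub hstep
  have hε : ((2 * m : ℕ) : ℝ) * (c * (m * D m) ^ p / (4 * m) ^ (p + 1))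
      = 2 * c / 4 ^ (p + 1) * (S (m + 1) - S m) ^ p := by
    rw [mul_rpow hm'.le hDm, mul_rpow (by norm_num) hm'.le, rpow_add_one hm'.ne']
    push_cast
    field_simp
  rw [show 2 * m + 2 * m = 4 * m by ring, hε] at h
  exact h

theorem exists_mul_rpow_lt_of_second_diff_ge {c p : ℝ} (hc : 0 < c) (hp : 1 < p)
    (hS : ∀ n, N₀ ≤ n →
      c * |S (n + 1)| ^ p / ((n : ℝ) + 1) ^ (p + 1) ≤ S (n + 2) - 2 * S (n + 1) + S n)
    (h₀ : 0 ≤ S N₀) (h₁ : S N₀ < S (N₀ + 1)) (C : ℝ) {q : ℝ} (hq : 0 ≤ q) :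
    ∃ n, N₀ ≤ n ∧ C * (n : ℝ) ^ q < S n := by
  by_contra! hbound
  have hconv : ∀ n, N₀ ≤ n → 0 ≤ S (n + 2) - 2 * S (n + 1) + S n := fun n hn =>
    le_trans (by positivity) (hS n hn)
  set D := fun n => S (n + 1) - S n
  have hDpos : ∀ n, N₀ ≤ n → 0 < D n := fun n hn =>
    (sub_pos.2 h₁).trans_le (increment_mono hconv le_rfl hn)
  have hSnonneg : ∀ n, N₀ ≤ n → 0 ≤ S n := fun n hn => by
    obtain ⟨t, rfl⟩ := Nat.exists_eq_add_of_le hn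
    have := add_mul_le_of_le_sub (T := t) fun s _ =>
      increment_mono hconv le_rfl (Nat.le_add_right N₀ s)
    linarith [mul_nonneg t.cast_nonneg (hDpos N₀ le_rfl).le]
  set m := fun j : ℕ => 2 ^ (N₀ + 2 * j) with hm
  have hmN : ∀ j, N₀ ≤ m j := fun j =>
    Nat.lt_two_pow_self.le.trans (Nat.pow_le_pow_right two_pos (Nat.le_add_right _ _))
  obtain ⟨j, hj⟩ := exists_mul_pow_lt_of_add_mul_rpow_le (b := fun j => D (m j))
    (by positivity : 0 < 2 * c / 4 ^ (p + 1)) hp (hDpos _ (hmN 0)) (fun j => by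
      have := dyadic_increment_step hc.le (by linarith) hS (hmN j) (by positivity)
        (hSnonneg _ (hmN j)) (hDpos _ (hmN j)).le
      have := increment_mono hconv (hmN j) (by omega : m j ≤ 2 * m j)
      simp only [show m (j + 1) = 4 * m j by simp only [hm]; ring]
      linarith)
    (max C 0 * (2 ^ q) ^ (N₀ + 1)) (by positivity : 0 < ((2 : ℝ) ^ q) ^ 2)
  refine hj.not_ge ?_
  calc D (m j) ≤ S (m j + 1) := by linarith [hSnonneg _ (hmN j)]
    _ ≤ C * ((m j + 1 : ℕ) : ℝ) ^ q := hbound _ (by linarith [hmN j])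
    _ ≤ max C 0 * (2 ^ q) ^ (N₀ + 2 * j + 1) :=
        (mul_le_mul_of_nonneg_right (le_max_left C 0) (by positivity)).trans
          (mul_le_mul_of_nonneg_left (natCast_two_pow_add_one_rpow_le hq _) (le_max_right C 0))
    _ = max C 0 * (2 ^ q) ^ (N₀ + 1) * ((2 ^ q) ^ 2) ^ j := by ring

end DiscreteKato

section BlowUp

lemma natCast_mul_sub_one_le_two {d : ℕ} {p : ℝ} (hp : p ≤ 1 + 2 / d) : d * (p - 1) ≤ 2 := by
  rcases Nat.eq_zero_or_pos d with rfl | hd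
  · simp
  · rw [← le_div_iff₀' (by exact_mod_cast hd)]
    linarith

lemma natCast_two_mul_add_one_le {N₀ R n : ℕ} (hN₀ : 1 ≤ N₀) (hn : N₀ ≤ n) :
    ((2 * (R + (n - N₀)) + 1 : ℕ) : ℝ) ≤ (2 * R + 3) * n := by
  have : 2 * (R + (n - N₀)) + 1 ≤ (2 * R + 3) * n := by
    have := Nat.sub_le n N₀
    nlinarith
  exact_mod_cast this

variable {d N₀ R : ℕ} {a b δ p : ℝ} {u : ℕ → (Fin d → ℤ) → ℝ}

theorem SolvesScheme.tanNonlinearity_second_diff_ge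
    (hu : SolvesScheme a b (fun n => tanNonlinearity δ p ((n : ℝ) ^ (p - 1))) N₀ u)
    (hab : 2 * d * a + b = 2) (hN₀ : 1 ≤ N₀) (hδ : 0 < δ) (hp : 1 ≤ p) (hdp : d * (p - 1) ≤ 2)
    (hcube : ∀ n, N₀ ≤ n → support (u n) ⊆ cube d (R + (n - N₀)))
    (hsmall : ∀ n, N₀ ≤ n → ∀ i, |u n i| < π / 2 * δ⁻¹ * (n : ℝ) ^ (p - 1))
    {n : ℕ} (hn : N₀ ≤ n) :
    δ ^ (3 - p) / (2 * R + 3) ^ (d * (p - 1)) * |∑ᶠ i, u (n + 1) i| ^ p / ((n : ℝ) + 1) ^ (p + 1)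
      ≤ ∑ᶠ i, u (n + 2) i - 2 * ∑ᶠ i, u (n + 1) i + ∑ᶠ i, u n i := by
  have hstep := hu.finsum_succ (fun n => tanNonlinearity_zero _ _ _) (n := n + 1) (by omega)
    ((cube d _).finite_toSet.subset (hcube _ (by omega)))
    ((cube d _).finite_toSet.subset (hcube n hn))
  have hlow := le_finsum_tanNonlinearity hδ hp hdp (by simp : (1 : ℝ) ≤ ((n + 1 : ℕ) : ℝ))
    (natCast_two_mul_add_one_le hN₀ (by omega)) (hcube (n + 1) (by omega))
    (hsmall (n + 1) (by omega))
  rw [hstep, hab, Nat.add_sub_cancel]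
  push_cast at hlow ⊢
  linarith

end BlowUp

theorem discrete_damped_wave_blowup_general
    (d N₀ : ℕ) (hN₀ : 1 ≤ N₀)
    (h : ℝ)
    (p : ℝ) (hp1 : 1 < p) (hp2 : p ≤ 1 + 2 / d)
    (δ : ℝ) (hδ : δ = 1 / N₀)
    (R : ℕ) (I : ℝ) (hI : 0 < I)
    (u : ℕ → (Fin d → ℤ) → ℝ)
    (hrec : ∀ n, N₀ < n → ∀ i : Fin d → ℤ,
      u (n + 1) i =
        δ ^ 2 / h ^ 2 * ∑ j : Fin d, (u n (i - Pi.single j 1) + u n (i + Pi.single j 1))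
        + (2 - 2 * d * δ ^ 2 / h ^ 2) * u n i - u (n - 1) i
        + δ ^ ((2 : ℝ) - p) * |u n i| ^ (p - 1) * Real.tan (δ * |u n i| / (n : ℝ) ^ (p - 1)))
    (hsupp : ∀ i : Fin d → ℤ, R < ∑ k, (i k).natAbs → u N₀ i = 0 ∧ u (N₀ + 1) i = 0)
    (hsum0 : 0 ≤ ∑ᶠ i : Fin d → ℤ, u N₀ i)
    (hsum1 : I < ∑ᶠ i : Fin d → ℤ, (u (N₀ + 1) i - u N₀ i)) :
    ∃ Nb : ℕ, N₀ ≤ Nb ∧ ∃ ib : Fin d → ℤ,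
      |u Nb ib| ≥ (Real.pi / 2) * δ⁻¹ * (Nb : ℝ) ^ (p - 1) := by
  by_contra! hsmall
  have hδ₀ : 0 < δ := hδ ▸ one_div_pos.2 (by exact_mod_cast hN₀)
  have hu : SolvesScheme (δ ^ 2 / h ^ 2) (2 - 2 * d * δ ^ 2 / h ^ 2)
      (fun n => tanNonlinearity δ p ((n : ℝ) ^ (p - 1))) N₀ u := hrec
  have hcube : ∀ n, N₀ ≤ n → support (u n) ⊆ cube d (R + (n - N₀)) := fun n =>
    hu.support_subset_cube (fun n => tanNonlinearity_zero _ _ _)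
      (support_subset_cube_of_natAbs fun i hi => (hsupp i hi).1)
      (support_subset_cube_of_natAbs fun i hi => (hsupp i hi).2)
  have hincr : ∑ᶠ i, u N₀ i < ∑ᶠ i, u (N₀ + 1) i := by
    rw [finsum_sub_distrib ((cube d _).finite_toSet.subset (hcube _ (Nat.le_succ N₀)))
      ((cube d _).finite_toSet.subset (hcube _ le_rfl))] at hsum1
    linarith
  obtain ⟨n, hn, hlt⟩ := exists_mul_rpow_lt_of_second_diff_ge (S := fun n => ∑ᶠ i, u n i)
    (div_pos (rpow_pos_of_pos hδ₀ _) (by positivity)) hp1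
    (fun n hn => hu.tanNonlinearity_second_diff_ge (by ring) hN₀ hδ₀ hp1.le
      (natCast_mul_sub_one_le_two hp2) hcube hsmall hn)
    hsum0 hincr ((2 * R + 3) ^ d * (π / 2 * δ⁻¹)) (q := d + (p - 1))
    (by linarith [d.cast_nonneg (α := ℝ)])
  exact hlt.not_ge (finsum_le_of_support_subset_cube (Nat.cast_pos.2 (by omega))
    (natCast_two_mul_add_one_le hN₀ hn) (hcube n hn) fun i => (hsmall n hn i).le)

theorem discrete_damped_wave_blowup
    (d N₀ : ℕ) (hd : 1 ≤ d) (hN₀ : 1 ≤ N₀)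
    (h : ℝ) (hh : 0 < h)
    (p : ℝ) (hp1 : 1 < p) (hp2 : p ≤ 1 + 2 / d)
    (δ : ℝ) (hδ : δ = 1 / N₀)
    (R : ℕ) (I : ℝ) (hI : 0 < I)
    (u : ℕ → (Fin d → ℤ) → ℝ)
    (hrec : ∀ n, N₀ < n → ∀ i : Fin d → ℤ,
      u (n + 1) i =
        δ ^ 2 / h ^ 2 * ∑ j : Fin d, (u n (i - Pi.single j 1) + u n (i + Pi.single j 1))
        + (2 - 2 * d * δ ^ 2 / h ^ 2) * u n i - u (n - 1) i
        + δ ^ ((2 : ℝ) - p) * |u n i| ^ (p - 1) * Real.tan (δ * |u n i| / (n : ℝ) ^ (p - 1)))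
    (hsupp : ∀ i : Fin d → ℤ, R < ∑ k, (i k).natAbs → u N₀ i = 0 ∧ u (N₀ + 1) i = 0)
    (hsum0 : 0 ≤ ∑ᶠ i : Fin d → ℤ, u N₀ i)
    (hsum1 : I < ∑ᶠ i : Fin d → ℤ, (u (N₀ + 1) i - u N₀ i)) :
    ∃ Nb : ℕ, N₀ ≤ Nb ∧ ∃ ib : Fin d → ℤ,
      |u Nb ib| ≥ (Real.pi / 2) * δ⁻¹ * (Nb : ℝ) ^ (p - 1) :=
  discrete_damped_wave_blowup_general d N₀ hN₀ h p hp1 hp2 δ hδ R I hI u hrec hsupp hsum0 hsum1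
end

section
/- Let p > 1 be real, N₂ ≥ 1 an integer, and C₁ > 0, C > 0 reals with C ≤ C₁. Let U : ℕ → ℝ be a sequence with U_n > 0 for n ≥ N₂, U monotonically increasing (U_n ≥ U_{n−1} for n > N₂), and satisfying U_{n+1} − 2U_n + U_{n−1} ≥ C₁·n^(−(p+1))·(U_n)^p for all n > N₂. Define E_n := (U_n − U_{n−1})² − (C/(p+1))·(U_{n−1}/(n−1))^(p+1) for n > N₂. Then E_{n+1} − E_n ≥ 0 for all n > N₂. -/
lemma rpow_sub_rpow_le_aux (x y q : ℝ) (hx : 0 < x) (hy : 0 ≤ y) (hq : 1 ≤ q) :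
    x ^ q - y ^ q ≤ q * x ^ (q - 1) * (x - y) := by
  have hx' : x ≠ 0 := hx.ne'
  have hs : (-1 : ℝ) ≤ y / x - 1 := by
    have : 0 ≤ y / x := div_nonneg hy hx.le
    linarith
  have hber := one_add_mul_self_le_rpow_one_add hs hq
  have h1 : (1 + (y / x - 1)) = y / x := by ring
  rw [h1] at hber
  have hxq : 0 < x ^ q := Real.rpow_pos_of_pos hx q
  have h2 : x ^ q * (1 + q * (y / x - 1)) ≤ x ^ q * (y / x) ^ q :=
    mul_le_mul_of_nonneg_left hber hxq.le
  rw [Real.div_rpow hy hx.le, mul_div_cancel₀ _ hxq.ne'] at h2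
  have hxq1 : x ^ (q - 1) * x = x ^ q := by
    rw [← Real.rpow_add_one hx' (q - 1)]; norm_num
  have h3 : x ^ q * (y / x) = x ^ (q - 1) * y := by
    rw [← hxq1]; field_simp
  nlinarith [h2, h3]

theorem discrete_energy_monotone
    (p : ℝ) (hp : 1 < p) (N₂ : ℕ) (hN₂ : 1 ≤ N₂)
    (C₁ C : ℝ) (hC₁ : 0 < C₁) (hC : 0 < C) (hCC₁ : C ≤ C₁)
    (U : ℕ → ℝ)
    (hpos : ∀ n, N₂ ≤ n → 0 < U n)
    (hmono : ∀ n, N₂ < n → U (n - 1) ≤ U n)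
    (hconv : ∀ n, N₂ < n →
      U (n + 1) - 2 * U n + U (n - 1) ≥ C₁ * (n : ℝ) ^ (-(p + 1)) * U n ^ p)
    (E : ℕ → ℝ)
    (hE : ∀ n, N₂ < n →
      E n = (U n - U (n - 1)) ^ 2 - (C / (p + 1)) * (U (n - 1) / ((n : ℝ) - 1)) ^ (p + 1)) :
    ∀ n, N₂ < n → E (n + 1) - E n ≥ 0 := by
  intro n hn
  have hn2 : 2 ≤ n := by omega
  have hnR : (2:ℝ) ≤ (n:ℝ) := by exact_mod_cast hn2
  have hn0 : (0:ℝ) < (n:ℝ) := by linarith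
  have hq : (0:ℝ) < p + 1 := by linarith
  have hUn : 0 < U n := hpos n (le_of_lt hn)
  have hUm : 0 < U (n-1) := hpos (n-1) (by omega)
  -- abbreviations
  set a := U (n+1) - U n with ha
  set b := U n - U (n-1) with hb
  have hbnn : 0 ≤ b := by
    have := hmono n hn; rw [hb]; linarith
  set K := (n:ℝ) ^ (-(p+1)) * U n ^ p with hK
  have hKpos : 0 < K :=
    mul_pos (Real.rpow_pos_of_pos hn0 _) (Real.rpow_pos_of_pos hUn _)
  have hab : C₁ * K ≤ a - b := by
    have h := hconv n hn
    rw [hK, ← mul_assoc]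
    have : a - b = U (n + 1) - 2 * U n + U (n - 1) := by rw [ha, hb]; ring
    linarith
  have hapb : 0 ≤ a + b := by nlinarith [mul_pos hC₁ hKpos]
  -- square difference bound
  have hsq : C * K * b ≤ a ^ 2 - b ^ 2 := by
    have h1 : C₁ * K * (a + b) ≤ (a - b) * (a + b) :=
      mul_le_mul_of_nonneg_right hab hapb
    have h2 : C * K * (a + b) ≤ C₁ * K * (a + b) :=
      mul_le_mul_of_nonneg_right (mul_le_mul_of_nonneg_right hCC₁ hKpos.le) hapb
    have h3 : C * K * b ≤ C * K * (a + b) := by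
      have hanon : 0 ≤ a := by nlinarith [mul_pos hC₁ hKpos]
      nlinarith [mul_pos hC hKpos]
    nlinarith
  -- potential difference bound
  set x := U n / (n:ℝ) with hx
  set y := U (n-1) / ((n:ℝ) - 1) with hy
  have hxpos : 0 < x := div_pos hUn hn0
  have hypos : 0 < y := div_pos hUm (by linarith)
  have hlem := rpow_sub_rpow_le_aux x y (p+1) hxpos hypos.le (by linarith)
  have hq1 : p + 1 - 1 = p := by ring
  rw [hq1] at hlem
  have hxy : x - y ≤ b / (n:ℝ) := by
    have h4 : U (n-1) / (n:ℝ) ≤ U (n-1) / ((n:ℝ) - 1) := by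
      apply div_le_div_of_nonneg_left hUm.le (by linarith) (by linarith)
    have h5 : x - U (n-1) / (n:ℝ) = b / (n:ℝ) := by
      rw [hx, hb]; ring
    linarith
  have hxp : x ^ p = U n ^ p / (n:ℝ) ^ p := by
    rw [hx, Real.div_rpow hUn.le hn0.le]
  have hKeq : K = U n ^ p / ((n:ℝ) ^ p * (n:ℝ)) := by
    rw [hK, Real.rpow_neg hn0.le, Real.rpow_add_one hn0.ne' p]
    ring
  have hxppos : 0 < x ^ p := Real.rpow_pos_of_pos hxpos p
  have hpot : (C / (p+1)) * (x ^ (p+1) - y ^ (p+1)) ≤ C * K * b := by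
    have h6 : x ^ p * (x - y) ≤ x ^ p * (b / (n:ℝ)) :=
      mul_le_mul_of_nonneg_left hxy hxppos.le
    have h7 : (C / (p+1)) * (x ^ (p+1) - y ^ (p+1))
        ≤ (C / (p+1)) * ((p+1) * x ^ p * (x - y)) :=
      mul_le_mul_of_nonneg_left hlem (by positivity)
    have h8 : (C / (p+1)) * ((p+1) * x ^ p * (x - y)) = C * (x ^ p * (x - y)) := by
      field_simp
    have h9 : C * (x ^ p * (b / (n:ℝ))) = C * K * b := by
      rw [hKeq, hxp]; field_simp
    calc (C / (p+1)) * (x ^ (p+1) - y ^ (p+1))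
        ≤ C * (x ^ p * (x - y)) := by rw [← h8]; exact h7
      _ ≤ C * (x ^ p * (b / (n:ℝ))) := mul_le_mul_of_nonneg_left h6 hC.le
      _ = C * K * b := h9
  -- assemble
  have hEn1 := hE (n+1) (by omega)
  have hEn := hE n hn
  simp only [Nat.add_sub_cancel] at hEn1
  have hc1 : ((n+1 : ℕ) : ℝ) - 1 = (n:ℝ) := by push_cast; ring
  rw [hc1] at hEn1
  rw [hEn1, hEn]
  have hgoal : (U (n+1) - U n) ^ 2 = a ^ 2 := by rw [ha]
  rw [hgoal]
  rw [show U n / (n:ℝ) = x from rfl, show U (n-1) / ((n:ℝ) - 1) = y from rfl,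
    show U n - U (n-1) = b from rfl]
  rw [mul_sub] at hpot
  clear_value a b K x y
  linarith [hsq, hpot]
end

section
/- Let p > 1 be real, N₂ ≥ 1 an integer, and C₁ > 0, C > 0 reals with C ≤ C₁. Let U : ℕ → ℝ be a sequence with U_n > 0 for n ≥ N₂, monotonically increasing for n ≥ N₂, satisfying U_{n+1} − 2U_n + U_{n−1} ≥ C₁·n^(−(p+1))·(U_n)^p for all n > N₂, and satisfying the initial energy condition (U_{N₂+1} − U_{N₂})² ≥ (C/(p+1))·(U_{N₂}/N₂)^(p+1). Then for every n > N₂ one has (U_{n+1} − U_n)² ≥ (C/(p+1))·(U_n/n)^(p+1). -/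
open Real

lemma rpow_sub_rpow_le_aux_s12 (q : ℝ) (hq : 1 ≤ q) {a b : ℝ} (ha : 0 < a) (hab : a ≤ b) :
    b ^ q - a ^ q ≤ q * b ^ (q - 1) * (b - a) := by
  have hb : 0 < b := ha.trans_le hab
  have hs : (-1 : ℝ) ≤ a / b - 1 := by
    have : 0 ≤ a / b := by positivity
    linarith
  have hber := one_add_mul_self_le_rpow_one_add hs hq
  have h1 : (1 : ℝ) + (a / b - 1) = a / b := by ring
  rw [h1] at hber
  have hdiv : (a / b) ^ q = a ^ q / b ^ q := Real.div_rpow ha.le hb.le q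
  rw [hdiv] at hber
  have hbq : 0 < b ^ q := Real.rpow_pos_of_pos hb q
  -- multiply by b ^ q
  have hber2 : (1 + q * (a / b - 1)) * b ^ q ≤ a ^ q := by
    calc (1 + q * (a / b - 1)) * b ^ q ≤ (a ^ q / b ^ q) * b ^ q :=
          mul_le_mul_of_nonneg_right hber hbq.le
      _ = a ^ q := by field_simp
  have hbq1 : b ^ (q - 1) = b ^ q / b := by
    rw [Real.rpow_sub hb, Real.rpow_one]
  have hexp : (1 + q * (a / b - 1)) * b ^ q = b ^ q + q * (b ^ q / b) * (a - b) := by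
    field_simp
  rw [hexp, ← hbq1] at hber2
  linarith

theorem discrete_energy_lower_bound
    (p : ℝ) (hp : 1 < p) (N₂ : ℕ) (hN₂ : 1 ≤ N₂)
    (C₁ C : ℝ) (hC₁ : 0 < C₁) (hC : 0 < C) (hCC₁ : C ≤ C₁)
    (U : ℕ → ℝ)
    (hpos : ∀ n, N₂ ≤ n → 0 < U n)
    (hmono : ∀ n, N₂ ≤ n → U n ≤ U (n + 1))
    (hconv : ∀ n, N₂ < n →
      U (n + 1) - 2 * U n + U (n - 1) ≥ C₁ * (n : ℝ) ^ (-(p + 1)) * U n ^ p)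
    (hinit : (U (N₂ + 1) - U N₂) ^ 2 ≥ (C / (p + 1)) * (U N₂ / (N₂ : ℝ)) ^ (p + 1)) :
    ∀ n, N₂ < n → (U (n + 1) - U n) ^ 2 ≥ (C / (p + 1)) * (U n / (n : ℝ)) ^ (p + 1) := by
  have hp1 : (0 : ℝ) < p + 1 := by linarith
  have hmain : ∀ n, N₂ ≤ n →
      (U (n + 1) - U n) ^ 2 ≥ (C / (p + 1)) * (U n / (n : ℝ)) ^ (p + 1) := by
    intro n hn
    induction n, hn using Nat.le_induction with
    | base => exact hinit
    | succ n hn ih =>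
      have hnpos : (0 : ℝ) < (n : ℝ) := by
        have : 1 ≤ n := le_trans hN₂ hn
        exact_mod_cast this
      have hn1pos : (0 : ℝ) < (n : ℝ) + 1 := by linarith
      have hUn : 0 < U n := hpos n hn
      have hUn1 : 0 < U (n + 1) := hpos (n + 1) (by omega)
      have hd : 0 ≤ U (n + 1) - U n := by linarith [hmono n hn]
      have hd' : 0 ≤ U (n + 2) - U (n + 1) := by
        have := hmono (n + 1) (by omega)
        have h2 : n + 1 + 1 = n + 2 := by ring
        rw [h2] at this
        linarith
      have hcv := hconv (n + 1) (by omega)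
      simp only [Nat.add_sub_cancel] at hcv
      push_cast at hcv
      set a : ℝ := U n / (n : ℝ) with ha_def
      set b : ℝ := U (n + 1) / ((n : ℝ) + 1) with hb_def
      have ha : 0 < a := by positivity
      have hb : 0 < b := by positivity
      set K : ℝ := C₁ * ((n : ℝ) + 1) ^ (-(p + 1)) * U (n + 1) ^ p with hK_def
      have hKpos : 0 < K := by
        have := Real.rpow_pos_of_pos hn1pos (-(p + 1))
        have := Real.rpow_pos_of_pos hUn1 p
        positivity
      have hKC : 0 < C * ((n : ℝ) + 1) ^ (-(p + 1)) * U (n + 1) ^ p := by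
        have := Real.rpow_pos_of_pos hn1pos (-(p + 1))
        have := Real.rpow_pos_of_pos hUn1 p
        positivity
      -- kinetic step
      have hcv' : U (n + 2) - U (n + 1) - (U (n + 1) - U n) ≥ K := by
        have h2 : (n : ℝ) + 1 + 1 = (n : ℝ) + 2 := by ring
        rw [hK_def]
        linarith [hcv]
      have hstep : (U (n + 2) - U (n + 1)) ^ 2 ≥
          (U (n + 1) - U n) ^ 2 + K * (U (n + 1) - U n) := by
        nlinarith [mul_nonneg hKpos.le hd', mul_nonneg hd hd',
          mul_le_mul_of_nonneg_right hcv' hd]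
      -- potential step : (C/(p+1)) * (b^(p+1) - a^(p+1)) ≤ K * d
      have hpot : (C / (p + 1)) * (b ^ (p + 1) - a ^ (p + 1)) ≤ K * (U (n + 1) - U n) := by
        rcases le_or_gt b a with hba | hab
        · have h1 : b ^ (p + 1) ≤ a ^ (p + 1) :=
            Real.rpow_le_rpow hb.le hba hp1.le
          have h2 : (0 : ℝ) ≤ K * (U (n + 1) - U n) := mul_nonneg hKpos.le hd
          have h3 : (C / (p + 1)) * (b ^ (p + 1) - a ^ (p + 1)) ≤ 0 := by
            apply mul_nonpos_of_nonneg_of_nonpos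
            · positivity
            · linarith
          linarith
        · have hkey := rpow_sub_rpow_le_aux_s12 (p + 1) (by linarith) ha hab.le
          have hps : p + 1 - 1 = p := by ring
          rw [hps] at hkey
          -- b - a ≤ (U (n+1) - U n) / (n + 1)
          have hba2 : b - a ≤ (U (n + 1) - U n) / ((n : ℝ) + 1) := by
            have h4 : U n / ((n : ℝ) + 1) ≤ U n / (n : ℝ) :=
              div_le_div_of_nonneg_left hUn.le hnpos (by linarith)
            have h5 : b - U n / ((n : ℝ) + 1) = (U (n + 1) - U n) / ((n : ℝ) + 1) := by
              rw [hb_def]; ring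
            linarith
          have hbp : b ^ p = U (n + 1) ^ p / ((n : ℝ) + 1) ^ p := by
            rw [hb_def, Real.div_rpow hUn1.le hn1pos.le]
          have hbp_pos : 0 < b ^ p := Real.rpow_pos_of_pos hb p
          have hrw : ((n : ℝ) + 1) ^ (-(p + 1)) =
              (((n : ℝ) + 1) ^ p)⁻¹ / ((n : ℝ) + 1) := by
            rw [Real.rpow_neg hn1pos.le, Real.rpow_add hn1pos, Real.rpow_one,
              mul_inv, div_eq_mul_inv]
          have hnp_pos : 0 < ((n : ℝ) + 1) ^ p := Real.rpow_pos_of_pos hn1pos p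
          have hUp_pos : 0 < U (n + 1) ^ p := Real.rpow_pos_of_pos hUn1 p
          calc (C / (p + 1)) * (b ^ (p + 1) - a ^ (p + 1))
              ≤ (C / (p + 1)) * ((p + 1) * b ^ p * (b - a)) := by
                apply mul_le_mul_of_nonneg_left hkey (by positivity)
            _ = C * b ^ p * (b - a) := by field_simp
            _ ≤ C * b ^ p * ((U (n + 1) - U n) / ((n : ℝ) + 1)) := by
                apply mul_le_mul_of_nonneg_left hba2 (by positivity)
            _ = C * ((n : ℝ) + 1) ^ (-(p + 1)) * U (n + 1) ^ p * (U (n + 1) - U n) := by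
                rw [hbp, hrw]; field_simp
            _ ≤ K * (U (n + 1) - U n) := by
                rw [hK_def]
                apply mul_le_mul_of_nonneg_right _ hd
                apply mul_le_mul_of_nonneg_right _ hUp_pos.le
                apply mul_le_mul_of_nonneg_right hCC₁
                  (Real.rpow_pos_of_pos hn1pos _).le
      -- combine
      have hgoal : (U (n + 2) - U (n + 1)) ^ 2 ≥ (C / (p + 1)) * b ^ (p + 1) := by
        have := ih
        linarith
      have h2 : n + 1 + 1 = n + 2 := by ring
      rw [h2]
      have h3 : ((n + 1 : ℕ) : ℝ) = (n : ℝ) + 1 := by push_cast; ring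
      rw [h3]
      exact hgoal
  intro n hn
  exact hmain n hn.le
end
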